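/- arXiv:1704.07462 — 5 statements merged into one kernel-verified Lean document; each statement's English description precedes it below -/
import Mathlib

section
/- Let f : ℝⁿ → ℝ be a homogeneous polynomial of even degree d ≥ 2 that is convex and positive definite. Then f is strictly convex, i.e., f(λx + (1−λ)y) < λf(x) + (1−λ)f(y) for all x ≠ y and λ ∈ (0,1). -/
/-!
Equality at an interior point of a segment forces the convex function `f` to agree with its chord
on a whole subsegment, hence, `f` being a polynomial, on the entire line through `x` and `y`.
By homogeneity `f (s • y + (x - y)) = s ^ d * f (s⁻¹ • x + (1 - s⁻¹) • y)` is then a multiple of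
`s ^ (d - 1)` for `s ≠ 0`, so letting `s → 0` gives `f (x - y) = 0` because `d ≥ 2`.
-/

open MvPolynomial Set

theorem ConvexOn.eq_of_mem_Icc_of_eq {E : Type*} [AddCommGroup E] [Module ℝ E] {s : Set E}
    {f : E → ℝ} (hf : ConvexOn ℝ s f) {x y : E} (hx : x ∈ s) (hy : y ∈ s) {l : ℝ}
    (hl : l ∈ Ioo 0 1) (heq : f (l • x + (1 - l) • y) = l * f x + (1 - l) * f y) {t : ℝ}
    (ht : t ∈ Icc l 1) : f (t • x + (1 - t) • y) = t * f x + (1 - t) * f y := by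
  obtain ⟨hl0, hl1⟩ := hl
  obtain ⟨hlt, ht1⟩ := ht
  have ht0 : 0 < t := hl0.trans_le hlt
  refine le_antisymm (hf.2 hx hy ht0.le (by linarith) (by ring)) ?_
  set z := t • x + (1 - t) • y
  have hz : z ∈ s := hf.1 hx hy ht0.le (by linarith) (by ring)
  -- the point of weight `l` lies on the segment from `y` to `z`
  obtain ⟨μ, hμ0, hμ1, rfl⟩ : ∃ μ : ℝ, 0 < μ ∧ μ ≤ 1 ∧ μ * t = l :=
    ⟨l / t, div_pos hl0 ht0, (div_le_one ht0).2 hlt, div_mul_cancel₀ l ht0.ne'⟩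
  have hsplit : (μ * t) • x + (1 - μ * t) • y = μ • z + (1 - μ) • y := by module
  have hle := hf.2 hz hy hμ0.le (sub_nonneg.2 hμ1) (by ring)
  rw [← hsplit, heq, smul_eq_mul, smul_eq_mul] at hle
  refine le_of_mul_le_mul_left ?_ hμ0
  linear_combination hle

namespace MvPolynomial

variable {σ : Type*}

theorem eval_line_eq_of_infinite {R : Type*} [CommRing R] [IsDomain R]
    (f : MvPolynomial σ R) (x y : σ → R) (a b : R)
    (h : {t : R | eval (t • x + (1 - t) • y) f = t * a + (1 - t) * b}.Infinite) (t : R) :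
    eval (t • x + (1 - t) • y) f = t * a + (1 - t) * b := by
  let p : Polynomial R := aeval (fun i => .C (x i) * .X + .C (y i) * (1 - .X)) f
  let q : Polynomial R := .C a * .X + .C b * (1 - .X)
  have hp : ∀ t, p.eval t = eval (t • x + (1 - t) • y) f := fun t => by
    have := comp_aeval_apply (Polynomial.aeval t : Polynomial R →ₐ[R] R) f
      (f := fun i => .C (x i) * .X + .C (y i) * (1 - .X))
    simp only [Polynomial.coe_aeval_eq_eval] at this
    rw [this, aeval_eq_eval]
    congr 2
    funext i
    simp only [Polynomial.eval_add, Polynomial.eval_mul, Polynomial.eval_C, Polynomial.eval_X,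
      Polynomial.eval_sub, Polynomial.eval_one, Pi.add_apply, Pi.smul_apply, smul_eq_mul]
    ring
  have hq : ∀ t, q.eval t = t * a + (1 - t) * b := fun t => by
    simp only [q, Polynomial.eval_add, Polynomial.eval_mul, Polynomial.eval_C, Polynomial.eval_X,
      Polynomial.eval_sub, Polynomial.eval_one]
    ring
  have hpq : p = q := Polynomial.eq_of_infinite_eval_eq p q (by simpa only [hp, hq] using h)
  rw [← hp, ← hq, hpq]

theorem IsHomogeneous.eval_smul {R : Type*} [CommSemiring R] {φ : MvPolynomial σ R} {n : ℕ}
    (hφ : φ.IsHomogeneous n) (c : R) (x : σ → R) : eval (c • x) φ = c ^ n * eval x φ := by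
  rw [eval_eq, eval_eq, Finset.mul_sum]
  refine Finset.sum_congr rfl fun m hm => ?_
  simp only [Pi.smul_apply, smul_eq_mul, mul_pow, Finset.prod_mul_distrib,
    Finset.prod_pow_eq_pow_sum, ← hφ.degree_eq_sum_deg_support hm]
  ring

theorem IsHomogeneous.eval_sub_eq_zero_of_eval_line {𝕜 : Type*} [NontriviallyNormedField 𝕜]
    {f : MvPolynomial σ 𝕜} {d : ℕ} (hf : f.IsHomogeneous d) (hd : 2 ≤ d) {x y : σ → 𝕜}
    {a b : 𝕜} (h : ∀ t : 𝕜, eval (t • x + (1 - t) • y) f = t * a + (1 - t) * b) :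
    eval (x - y) f = 0 := by
  have hscaled : ∀ s ≠ (0 : 𝕜),
      eval (s • y + (x - y)) f = s ^ (d - 1) * a + (s ^ d - s ^ (d - 1)) * b := by
    intro s hs
    have hpt : s • y + (x - y) = s • (s⁻¹ • x + (1 - s⁻¹) • y) := by
      rw [smul_add, smul_smul, smul_smul, mul_inv_cancel₀ hs, mul_sub, mul_inv_cancel₀ hs]
      module
    obtain ⟨k, rfl⟩ : ∃ k, d = k + 1 := ⟨d - 1, by omega⟩
    rw [hpt, hf.eval_smul, h, Nat.add_sub_cancel, pow_succ]
    field_simp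
  have hcont : Continuous fun s : 𝕜 => eval (s • y + (x - y)) f :=
    (continuous_eval f).comp (by fun_prop)
  have hext := hcont.ext_on (dense_compl_singleton 0) (by fun_prop) hscaled
  simpa [zero_pow (by omega : d ≠ 0), zero_pow (by omega : d - 1 ≠ 0)] using congrFun hext 0

end MvPolynomial

theorem stmt1_general (n d : ℕ) (hd : 2 ≤ d)
    (f : MvPolynomial (Fin n) ℝ) (hf : f.IsHomogeneous d)
    (hconv : ConvexOn ℝ univ (fun x => eval x f))
    (hpos : ∀ x : Fin n → ℝ, x ≠ 0 → 0 < eval x f) :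
    ∀ x y : Fin n → ℝ, x ≠ y → ∀ l : ℝ, l ∈ Ioo (0 : ℝ) 1 →
      eval (l • x + (1 - l) • y) f < l * eval x f + (1 - l) * eval y f := by
  intro x y hxy l hl
  have hle : eval (l • x + (1 - l) • y) f ≤ l * eval x f + (1 - l) * eval y f :=
    hconv.2 (mem_univ x) (mem_univ y) hl.1.le (sub_nonneg.2 hl.2.le) (by ring)
  refine hle.lt_of_ne fun heq => ?_
  have hchord :
      {t | eval (t • x + (1 - t) • y) f = t * eval x f + (1 - t) * eval y f}.Infinite :=
    (Icc_infinite hl.2).mono fun t ht =>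
      hconv.eq_of_mem_Icc_of_eq (mem_univ x) (mem_univ y) hl heq ht
  have hline := eval_line_eq_of_infinite f x y _ _ hchord
  exact (hpos (x - y) (sub_ne_zero.2 hxy)).ne' (hf.eval_sub_eq_zero_of_eval_line hd hline)

theorem stmt1 (n d : ℕ) (hn : 2 ≤ n) (hd : 2 ≤ d) (hdeven : Even d)
    (f : MvPolynomial (Fin n) ℝ) (hf : f.IsHomogeneous d)
    (hconv : ConvexOn ℝ univ (fun x => eval x f))
    (hpos : ∀ x : Fin n → ℝ, x ≠ 0 → 0 < eval x f) :
    ∀ x y : Fin n → ℝ, x ≠ y → ∀ l : ℝ, l ∈ Ioo (0 : ℝ) 1 →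
      eval (l • x + (1 - l) • y) f < l * eval x f + (1 - l) * eval y f :=
  stmt1_general n d hd f hf hconv hpos
end

section
/- Let f : ℝⁿ → ℝ be a strictly convex homogeneous polynomial of even degree d ≥ 2. Then the function x ↦ f(x)^(1/d) is a norm on ℝⁿ. -/
/-!
Write `F x = f(x)` and `‖x‖ = F x ^ (1/d)`. Strict convexity on the segment from `0` to `x ≠ 0`
gives `2⁻ᵈ F x = F (x/2) < F x / 2`, so `F x > 0` because `d > 1`. Since `d` is even,
`F (c x) = |c|ᵈ F x`, whence `‖c x‖ = |c| ‖x‖`. For the triangle inequality, `x/‖x‖` and `y/‖y‖`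
lie in the sublevel set `{F ≤ 1}`, which is convex, and `(x + y)/(‖x‖ + ‖y‖)` is a convex
combination of them; so `F (x + y) ≤ (‖x‖ + ‖y‖)ᵈ`.
-/

open MvPolynomial Set

theorem MvPolynomial.IsHomogeneous.eval_smul_s2 {σ R : Type*} [CommSemiring R]
    {φ : MvPolynomial σ R} {d : ℕ} (hφ : φ.IsHomogeneous d) (c : R) (x : σ → R) :
    eval (c • x) φ = c ^ d * eval x φ := by
  rw [eval_eq, eval_eq, Finset.mul_sum]
  refine Finset.sum_congr rfl fun m hm ↦ ?_
  have hdeg : ∑ i ∈ m.support, m i = d := by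
    simpa [Finsupp.weight_apply, Finsupp.sum] using hφ (mem_support_iff.mp hm)
  simp only [Pi.smul_apply, smul_eq_mul, mul_pow, Finset.prod_mul_distrib,
    Finset.prod_pow_eq_pow_sum, hdeg]
  ring

section HomogeneousFunction

variable {E : Type*} [AddCommGroup E] [Module ℝ E] {F : E → ℝ} {d : ℕ}

theorem map_zero_of_map_smul_eq_pow_mul (hF : ∀ (c : ℝ) x, F (c • x) = c ^ d * F x)
    (hd : d ≠ 0) : F 0 = 0 := by
  simpa [zero_pow hd] using hF 0 0

theorem pos_of_strictConvexOn_of_map_smul_eq_pow_mul (hF : ∀ (c : ℝ) x, F (c • x) = c ^ d * F x)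
    (hd : 1 < d) (hconv : StrictConvexOn ℝ univ F) {x : E} (hx : x ≠ 0) : 0 < F x := by
  have hmid := hconv.2 (mem_univ x) (mem_univ 0) hx (by norm_num : (0 : ℝ) < 2⁻¹)
    (by norm_num : (0 : ℝ) < 2⁻¹) (by norm_num)
  rw [smul_zero, add_zero, hF, map_zero_of_map_smul_eq_pow_mul hF (by omega),
    smul_zero, add_zero, smul_eq_mul] at hmid
  have hpow : (2⁻¹ : ℝ) ^ d < 2⁻¹ := pow_lt_self_of_lt_one₀ (by norm_num) (by norm_num) hd
  nlinarith

theorem nonneg_of_map_smul_eq_pow_mul (hF : ∀ (c : ℝ) x, F (c • x) = c ^ d * F x) (hd : d ≠ 0)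
    (hF_pos : ∀ x, x ≠ 0 → 0 < F x) (x : E) : 0 ≤ F x := by
  rcases eq_or_ne x 0 with rfl | hx
  · exact (map_zero_of_map_smul_eq_pow_mul hF hd).ge
  · exact (hF_pos x hx).le

theorem rpow_inv_map_smul_of_even (hF : ∀ (c : ℝ) x, F (c • x) = c ^ d * F x) (hd : d ≠ 0)
    (hev : Even d) (hF_nonneg : ∀ x, 0 ≤ F x) (c : ℝ) (x : E) :
    F (c • x) ^ (d : ℝ)⁻¹ = |c| * F x ^ (d : ℝ)⁻¹ := by
  rw [hF, ← hev.pow_abs, Real.mul_rpow (by positivity) (hF_nonneg x),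
    Real.pow_rpow_inv_natCast (abs_nonneg c) hd]

theorem rpow_inv_map_add_le (hF : ∀ (c : ℝ) x, F (c • x) = c ^ d * F x) (hd : d ≠ 0)
    (hconv : ConvexOn ℝ univ F) (hF_pos : ∀ x, x ≠ 0 → 0 < F x) (x y : E) :
    F (x + y) ^ (d : ℝ)⁻¹ ≤ F x ^ (d : ℝ)⁻¹ + F y ^ (d : ℝ)⁻¹ := by
  have hF0 := map_zero_of_map_smul_eq_pow_mul hF hd
  have hzero : (0 : ℝ) ^ (d : ℝ)⁻¹ = 0 := Real.zero_rpow (by positivity)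
  rcases eq_or_ne x 0 with rfl | hx
  · simp [hF0, hzero]
  rcases eq_or_ne y 0 with rfl | hy
  · simp [hF0, hzero]
  have hnormalize : ∀ z, z ≠ 0 → F ((F z ^ (d : ℝ)⁻¹)⁻¹ • z) = 1 := fun z hz ↦ by
    rw [hF, inv_pow, Real.rpow_inv_natCast_pow (hF_pos z hz).le hd,
      inv_mul_cancel₀ (hF_pos z hz).ne']
  set a := F x ^ (d : ℝ)⁻¹
  set b := F y ^ (d : ℝ)⁻¹
  have ha : 0 < a := Real.rpow_pos_of_pos (hF_pos x hx) _
  have hb : 0 < b := Real.rpow_pos_of_pos (hF_pos y hy) _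
  have hab : 0 < a + b := add_pos ha hb
  have hcombo : (a + b)⁻¹ • (x + y) = (a / (a + b)) • (a⁻¹ • x) + (b / (a + b)) • (b⁻¹ • y) := by
    rw [smul_add, smul_smul, smul_smul]
    congr 2 <;> field_simp
  have hunit : F ((a + b)⁻¹ • (x + y)) ≤ 1 := by
    calc F ((a + b)⁻¹ • (x + y))
        ≤ a / (a + b) * F (a⁻¹ • x) + b / (a + b) * F (b⁻¹ • y) := by
          rw [hcombo]
          exact hconv.2 (mem_univ _) (mem_univ _) (by positivity) (by positivity)
            (by field_simp)
      _ = 1 := by rw [hnormalize x hx, hnormalize y hy]; field_simp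
  have hxy : F (x + y) ≤ (a + b) ^ d := by
    rw [← smul_inv_smul₀ hab.ne' (x + y), hF]
    exact mul_le_of_le_one_right (by positivity) hunit
  rwa [Real.rpow_inv_le_iff_of_pos (nonneg_of_map_smul_eq_pow_mul hF hd hF_pos _) hab.le
    (by exact_mod_cast hd.bot_lt), Real.rpow_natCast]

end HomogeneousFunction

theorem stmt2 (n d : ℕ) (hd : 2 ≤ d) (hdeven : Even d)
    (f : MvPolynomial (Fin n) ℝ) (hf : f.IsHomogeneous d)
    (hstrict : ∀ x y : Fin n → ℝ, x ≠ y → ∀ l : ℝ, l ∈ Ioo (0 : ℝ) 1 →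
      eval (l • x + (1 - l) • y) f < l * eval x f + (1 - l) * eval y f)
    (g : (Fin n → ℝ) → ℝ) (hg : ∀ x, g x = (eval x f) ^ ((d : ℝ)⁻¹)) :
    (∀ x : Fin n → ℝ, x ≠ 0 → 0 < g x) ∧ g 0 = 0 ∧
    (∀ (c : ℝ) (x : Fin n → ℝ), g (c • x) = |c| * g x) ∧
    (∀ x y : Fin n → ℝ, g (x + y) ≤ g x + g y) := by
  obtain rfl : g = fun x ↦ eval x f ^ (d : ℝ)⁻¹ := funext hg
  have hd0 : d ≠ 0 := by omega
  have hF := hf.eval_smul_s2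
  have hconv : StrictConvexOn ℝ univ (fun x ↦ eval x f) :=
    ⟨convex_univ, fun x _ y _ hxy a b ha hb hab ↦ by
      obtain rfl : b = 1 - a := by linarith
      exact hstrict x y hxy a ⟨ha, by linarith⟩⟩
  have hF0 : eval 0 f = 0 := map_zero_of_map_smul_eq_pow_mul (F := fun x ↦ eval x f) hF hd0
  have hpos x (hx : x ≠ 0) := pos_of_strictConvexOn_of_map_smul_eq_pow_mul hF hd hconv hx
  refine ⟨fun x hx ↦ Real.rpow_pos_of_pos (hpos x hx) _, ?_,
    rpow_inv_map_smul_of_even hF hd0 hdeven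
      (nonneg_of_map_smul_eq_pow_mul hF hd0 hpos),
    rpow_inv_map_add_le hF hd0 hconv.convexOn hpos⟩
  exact (congrArg (· ^ (d : ℝ)⁻¹) hF0).trans (Real.zero_rpow (by positivity))
end

section
/- Let ‖·‖ be a norm on ℝⁿ and d an even positive integer. Define f_d(x) = (1/vol(B°)) ∫_{B°} ⟨x,y⟩^d dy. Then for all x ∈ ℝⁿ, f_d(x)^(1/d) ≥ (d/(n+d)) · (n/(n+d))^(n/d) · ‖x‖. -/
/-!
Fix `x ≠ 0`. By Hahn–Banach some `y₀ ∈ B°` has `⟪x, y₀⟫ = ‖x‖`. For `0 < s ≤ 1`, the convex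
symmetric body `B°` contains `s • y₀ + (1 - s) • (B° ∩ {⟪x, ·⟫ ≥ 0})` and its reflection; these
are disjoint, have volume `(1 - s)ⁿ vol (B° ∩ {⟪x, ·⟫ ≥ 0}) ≥ (1 - s)ⁿ vol B° / 2` each, and
`|⟪x, ·⟫| ≥ s ‖x‖` on them. Hence `f_d(x) ≥ (s ‖x‖)ᵈ (1 - s)ⁿ`, and `s = d / (n + d)` maximises
`sᵈ (1 - s)ⁿ`.
-/

open Set MeasureTheory
open scoped RealInnerProductSpace Pointwise

theorem Seminorm.exists_dual_le_apply_eq {E : Type*} [AddCommGroup E] [Module ℝ E]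
    (p : Seminorm ℝ E) (x : E) : ∃ g : Module.Dual ℝ E, (∀ z, g z ≤ p z) ∧ g x = p x := by
  let f : E →ₗ.[ℝ] ℝ := LinearPMap.mkSpanSingleton' x (p x) fun c hc => by
    rcases smul_eq_zero.1 hc with rfl | rfl <;> simp
  obtain ⟨g, hgf, hgp⟩ := Module.Dual.exists_extension_of_le_seminorm_real f.domain f.toFun
    (p := p) <| by
      rintro ⟨z, hz⟩
      obtain ⟨c, rfl⟩ := Submodule.mem_span_singleton.1 hz
      calc f ⟨c • x, hz⟩ = c * p x := LinearPMap.mkSpanSingleton'_apply _ _ _ c hz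
        _ ≤ |c| * p x := mul_le_mul_of_nonneg_right (le_abs_self c) (apply_nonneg p x)
        _ = p (c • x) := by rw [map_smul_eq_mul, Real.norm_eq_abs]
  refine ⟨g, fun z => (le_abs_self _).trans (hgp z), ?_⟩
  exact (hgf ⟨x, Submodule.mem_span_singleton_self x⟩).trans
    (LinearPMap.mkSpanSingleton'_apply_self _ _ _ _)

section FiniteDimensional

variable {E : Type*} [NormedAddCommGroup E] [NormedSpace ℝ E] [FiniteDimensional ℝ E]

theorem Seminorm.continuous_of_finiteDimensional (p : Seminorm ℝ E) : Continuous p :=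
  continuousOn_univ.1 (p.convexOn.continuousOn isOpen_univ)

theorem Seminorm.exists_pos_mul_norm_le [Nontrivial E] {p : Seminorm ℝ E}
    (hp : ∀ x ≠ 0, 0 < p x) : ∃ m > 0, ∀ z, m * ‖z‖ ≤ p z := by
  obtain ⟨z₀, hz₀, hmin⟩ := (isCompact_sphere (0 : E) 1).exists_isMinOn
    (NormedSpace.sphere_nonempty.2 zero_le_one) p.continuous_of_finiteDimensional.continuousOn
  refine ⟨p z₀, hp z₀ (ne_zero_of_mem_sphere one_ne_zero ⟨z₀, hz₀⟩), fun z => ?_⟩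
  rcases eq_or_ne z 0 with rfl | hz
  · simp
  have hz' : 0 < ‖z‖ := norm_pos_iff.2 hz
  have : p z₀ ≤ p (‖z‖⁻¹ • z) :=
    hmin (show ‖z‖⁻¹ • z ∈ Metric.sphere (0 : E) 1 by simp [norm_smul, hz'.ne'])
  rw [map_smul_eq_mul, Real.norm_eq_abs, abs_inv, abs_norm] at this
  rwa [le_inv_mul_iff₀ hz', mul_comm] at this

end FiniteDimensional

section Polar

variable {E : Type*} [NormedAddCommGroup E] [InnerProductSpace ℝ E]

def polarUnitBall (p : E → ℝ) : Set E := {y | ∀ x ∈ {x | p x ≤ 1}, ⟪x, y⟫ ≤ 1}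

theorem polarUnitBall_eq_biInter (p : E → ℝ) :
    polarUnitBall p = ⋂ x ∈ {x | p x ≤ 1}, {y | ⟪x, y⟫ ≤ 1} := by
  ext; simp [polarUnitBall]

theorem convex_polarUnitBall (p : E → ℝ) : Convex ℝ (polarUnitBall p) := by
  rw [polarUnitBall_eq_biInter]
  exact convex_iInter₂ fun x _ => convex_halfSpace_le (innerₛₗ ℝ x).isLinear 1

theorem isClosed_polarUnitBall (p : E → ℝ) : IsClosed (polarUnitBall p) := by
  rw [polarUnitBall_eq_biInter]
  exact isClosed_biInter fun x _ =>
    isClosed_le (continuous_const.inner continuous_id) continuous_const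

variable {p : Seminorm ℝ E}

theorem mem_polarUnitBall_iff (hp : ∀ x ≠ 0, 0 < p x) {y : E} :
    y ∈ polarUnitBall p ↔ ∀ x, ⟪x, y⟫ ≤ p x := by
  refine ⟨fun hy x => ?_, fun hy x hx => (hy x).trans hx⟩
  rcases eq_or_ne x 0 with rfl | hx
  · simp
  have hpx := hp x hx
  have := hy ((p x)⁻¹ • x) (by simp [map_smul_eq_mul, abs_of_pos hpx, hpx.ne'])
  rwa [real_inner_smul_left, inv_mul_le_iff₀ hpx, mul_one] at this

theorem neg_mem_polarUnitBall (hp : ∀ x ≠ 0, 0 < p x) {y : E} (hy : y ∈ polarUnitBall p) :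
    -y ∈ polarUnitBall p := by
  rw [mem_polarUnitBall_iff hp] at hy ⊢
  intro x
  simpa [inner_neg_right, ← inner_neg_left] using hy (-x)

theorem closedBall_subset_polarUnitBall (hp : ∀ x ≠ 0, 0 < p x) {m : ℝ}
    (hm : ∀ z, m * ‖z‖ ≤ p z) : Metric.closedBall 0 m ⊆ polarUnitBall p := by
  intro y hy
  rw [mem_closedBall_zero_iff] at hy
  rw [mem_polarUnitBall_iff hp]
  intro x
  calc ⟪x, y⟫ ≤ ‖x‖ * ‖y‖ := real_inner_le_norm x y
    _ ≤ ‖x‖ * m := by gcongr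
    _ ≤ p x := by rw [mul_comm]; exact hm x

theorem polarUnitBall_subset_closedBall (hp : ∀ x ≠ 0, 0 < p x) {C : ℝ} (hC : 0 ≤ C)
    (hpC : ∀ z, p z ≤ C * ‖z‖) : polarUnitBall p ⊆ Metric.closedBall 0 C := by
  intro y hy
  rw [mem_closedBall_zero_iff]
  rcases eq_or_ne y 0 with rfl | hy0
  · simpa using hC
  have hy' : 0 < ‖y‖ := norm_pos_iff.2 hy0
  have : ‖y‖ * ‖y‖ ≤ C * ‖y‖ := by
    rw [← real_inner_self_eq_norm_mul_norm]
    exact ((mem_polarUnitBall_iff hp).1 hy y).trans (hpC y)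
  exact le_of_mul_le_mul_right this hy'

theorem exists_mem_polarUnitBall_inner_eq [FiniteDimensional ℝ E] (hp : ∀ x ≠ 0, 0 < p x)
    (x : E) : ∃ y ∈ polarUnitBall p, ⟪x, y⟫ = p x := by
  obtain ⟨g, hgp, hgx⟩ := p.exists_dual_le_apply_eq x
  let y := (InnerProductSpace.toDual ℝ E).symm (LinearMap.toContinuousLinearMap g)
  have hy : ∀ z, ⟪z, y⟫ = g z := fun z => by
    rw [real_inner_comm]; exact InnerProductSpace.toDual_symm_apply
  exact ⟨y, (mem_polarUnitBall_iff hp).2 fun z => (hy z).trans_le (hgp z), (hy x).trans hgx⟩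

end Polar

section SlabVolume

open Module

variable {E : Type*} [NormedAddCommGroup E] [NormedSpace ℝ E] {P : Set E} (ℓ : E →L[ℝ] ℝ)

theorem vadd_smul_inter_nonneg_subset (hPc : Convex ℝ P) {y₀ : E} (hy₀ : y₀ ∈ P) {s : ℝ}
    (hs₀ : 0 ≤ s) (hs₁ : s ≤ 1) :
    s • y₀ +ᵥ (1 - s) • (P ∩ {y | 0 ≤ ℓ y}) ⊆ P ∩ {y | s * ℓ y₀ ≤ ℓ y} := by
  rintro _ ⟨_, ⟨z, ⟨hzP, hz⟩, rfl⟩, rfl⟩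
  refine ⟨by simpa [add_comm] using hPc hzP hy₀ (sub_nonneg.2 hs₁) hs₀ (by ring), ?_⟩
  have : 0 ≤ (1 - s) * ℓ z := mul_nonneg (sub_nonneg.2 hs₁) hz
  simp only [vadd_eq_add, map_add, map_smul, smul_eq_mul, Set.mem_ofPred_eq]
  linarith

variable [MeasurableSpace E]

theorem measure_le_two_mul_measure_inter_nonneg [MeasurableNeg E] (μ : Measure E)
    [μ.IsNegInvariant] (hPs : ∀ y ∈ P, -y ∈ P) :
    μ P ≤ 2 * μ (P ∩ {y | 0 ≤ ℓ y}) := by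
  set H := P ∩ {y | 0 ≤ ℓ y}
  have hPH : P ⊆ H ∪ -H := by
    intro y hy
    rcases le_or_gt 0 (ℓ y) with h | h
    · exact Or.inl ⟨hy, h⟩
    · exact Or.inr ⟨hPs y hy, by simpa using h.le⟩
  calc μ P ≤ μ (H ∪ -H) := measure_mono hPH
    _ ≤ μ H + μ (-H) := measure_union_le _ _
    _ = 2 * μ H := by rw [Measure.measure_neg, two_mul]

variable [BorelSpace E] [FiniteDimensional ℝ E] (μ : Measure E) [μ.IsAddHaarMeasure]

theorem ofReal_pow_mul_measure_le_measure_abs_ge (hPm : MeasurableSet P) (hPc : Convex ℝ P)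
    (hPs : ∀ y ∈ P, -y ∈ P) {y₀ : E} (hy₀ : y₀ ∈ P) (hℓ : 0 < ℓ y₀) {s : ℝ} (hs₀ : 0 < s)
    (hs₁ : s ≤ 1) :
    ENNReal.ofReal ((1 - s) ^ finrank ℝ E) * μ P ≤ μ (P ∩ {y | s * ℓ y₀ ≤ |ℓ y|}) := by
  set H := P ∩ {y | 0 ≤ ℓ y}
  set K := s • y₀ +ᵥ (1 - s) • H
  have hKm : MeasurableSet K :=
    ((hPm.inter (measurableSet_le measurable_const ℓ.measurable)).const_smul₀ _).const_vadd _
  have hK := vadd_smul_inter_nonneg_subset ℓ hPc hy₀ hs₀.le hs₁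
  have ht : 0 < s * ℓ y₀ := mul_pos hs₀ hℓ
  have hdisj : Disjoint K (-K) := by
    refine Set.disjoint_left.2 fun w hw hw' => ?_
    have h₁ := (hK hw).2
    have h₂ := (hK hw').2
    simp only [Set.mem_ofPred_eq, map_neg] at h₁ h₂
    linarith
  have hKA : K ∪ -K ⊆ P ∩ {y | s * ℓ y₀ ≤ |ℓ y|} := by
    refine Set.union_subset (fun w hw => ⟨(hK hw).1, le_trans (hK hw).2 (le_abs_self (ℓ w))⟩)
      fun w hw => ⟨by simpa using hPs _ (hK hw).1, ?_⟩
    have := (hK hw).2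
    simp only [Set.mem_ofPred_eq, map_neg] at this ⊢
    exact this.trans (neg_le_abs _)
  calc ENNReal.ofReal ((1 - s) ^ finrank ℝ E) * μ P
      ≤ ENNReal.ofReal ((1 - s) ^ finrank ℝ E) * (2 * μ H) := by
        gcongr; exact measure_le_two_mul_measure_inter_nonneg ℓ μ hPs
    _ = μ K + μ (-K) := by
        rw [Measure.measure_neg, measure_vadd, Measure.addHaar_smul,
          abs_of_nonneg (pow_nonneg (sub_nonneg.2 hs₁) _)]
        ring
    _ = μ (K ∪ -K) := (measure_union hdisj hKm.neg).symm
    _ ≤ _ := measure_mono hKA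

theorem pow_mul_measureReal_le_setIntegral_pow (hP : IsCompact P) (hPc : Convex ℝ P)
    (hPs : ∀ y ∈ P, -y ∈ P) {y₀ : E} (hy₀ : y₀ ∈ P) (hℓ : 0 < ℓ y₀) {s : ℝ} (hs₀ : 0 < s)
    (hs₁ : s ≤ 1) {d : ℕ} (hd : Even d) :
    (s * ℓ y₀) ^ d * (1 - s) ^ finrank ℝ E * μ.real P ≤ ∫ y in P, ℓ y ^ d ∂μ := by
  set t := s * ℓ y₀
  have ht : 0 < t := mul_pos hs₀ hℓ
  have hslab : P ∩ {y | t ≤ |ℓ y|} ⊆ {y | t ^ d ≤ ℓ y ^ d} ∩ P := fun y hy =>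
    ⟨(pow_le_pow_left₀ ht.le hy.2 d).trans_eq (hd.pow_abs (ℓ y)), hy.1⟩
  have hvol : (1 - s) ^ finrank ℝ E * μ.real P ≤ (μ.restrict P).real {y | t ^ d ≤ ℓ y ^ d} := by
    have := (ofReal_pow_mul_measure_le_measure_abs_ge ℓ μ hP.measurableSet hPc hPs hy₀ hℓ hs₀
      hs₁).trans ((measure_mono hslab).trans (Measure.le_restrict_apply _ _))
    have hfin : (μ.restrict P) {y | t ^ d ≤ ℓ y ^ d} ≠ ⊤ :=
      ((measure_mono (Set.subset_univ _)).trans_lt (by simpa using hP.measure_lt_top)).ne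
    simpa [Measure.real, ENNReal.toReal_mul,
      pow_nonneg (sub_nonneg.2 hs₁)] using ENNReal.toReal_mono hfin this
  calc t ^ d * (1 - s) ^ finrank ℝ E * μ.real P
      ≤ t ^ d * (μ.restrict P).real {y | t ^ d ≤ ℓ y ^ d} := by
        rw [mul_assoc]; gcongr
    _ ≤ ∫ y in P, ℓ y ^ d ∂μ :=
        mul_meas_ge_le_integral_of_nonneg (ae_of_all _ fun y => hd.pow_nonneg _)
          ((ℓ.continuous.pow d).continuousOn.integrableOn_compact hP) _

end SlabVolume

section PolarMoment

open Module

variable {E : Type*} [NormedAddCommGroup E] [InnerProductSpace ℝ E] [FiniteDimensional ℝ E]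
  {p : Seminorm ℝ E}

theorem isCompact_polarUnitBall (hp : ∀ x ≠ 0, 0 < p x) : IsCompact (polarUnitBall p) := by
  obtain ⟨C, hC, hpC⟩ := p.bound_of_continuous_normedSpace p.continuous_of_finiteDimensional
  exact (isCompact_closedBall 0 C).of_isClosed_subset (isClosed_polarUnitBall p)
    (polarUnitBall_subset_closedBall hp hC.le hpC)

variable [MeasurableSpace E] (μ : Measure E) [μ.IsAddHaarMeasure]

theorem measure_polarUnitBall_pos [Nontrivial E] (hp : ∀ x ≠ 0, 0 < p x) :
    0 < μ (polarUnitBall p) := by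
  obtain ⟨m, hm, hpm⟩ := Seminorm.exists_pos_mul_norm_le hp
  exact (Metric.measure_closedBall_pos μ 0 hm).trans_le
    (measure_mono (closedBall_subset_polarUnitBall hp hpm))

theorem pow_mul_pow_le_polarUnitBall_moment [BorelSpace E] (hp : ∀ x ≠ 0, 0 < p x) {d : ℕ}
    (hd : 0 < d) (hdeven : Even d) {x : E} (hx : x ≠ 0) :
    (d / (finrank ℝ E + d) * p x) ^ d * (finrank ℝ E / (finrank ℝ E + d)) ^ finrank ℝ E ≤
      (μ (polarUnitBall p)).toReal⁻¹ * ∫ y in polarUnitBall p, ⟪x, y⟫ ^ d ∂μ := by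
  have : Nontrivial E := ⟨⟨x, 0, hx⟩⟩
  obtain ⟨y₀, hy₀, hxy₀⟩ := exists_mem_polarUnitBall_inner_eq hp x
  have hP := isCompact_polarUnitBall hp
  have hvol : 0 < μ.real (polarUnitBall p) :=
    ENNReal.toReal_pos (measure_polarUnitBall_pos μ hp).ne' hP.measure_lt_top.ne
  have hnd : (0 : ℝ) < finrank ℝ E + d := by positivity
  have hbound := pow_mul_measureReal_le_setIntegral_pow (innerSL ℝ x) μ hP
    (convex_polarUnitBall p) (fun y => neg_mem_polarUnitBall hp) hy₀
    (by simpa [hxy₀] using hp x hx) (s := d / (finrank ℝ E + d)) (by positivity)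
    (div_le_one_of_le₀ (by simp) hnd.le) hdeven
  have h1s : 1 - d / (finrank ℝ E + d : ℝ) = finrank ℝ E / (finrank ℝ E + d) := by
    field_simp; ring
  simp only [innerSL_apply_apply, hxy₀, h1s] at hbound
  rw [← le_div_iff₀ hvol] at hbound
  exact hbound.trans_eq (div_eq_inv_mul _ _)

end PolarMoment

theorem stmt9_general (n : ℕ) (d : ℕ) (hd : 0 < d) (hdeven : Even d)
    (N : EuclideanSpace ℝ (Fin n) → ℝ)
    (hpos : ∀ x, x ≠ 0 → 0 < N x)
    (hhom : ∀ (c : ℝ) x, N (c • x) = |c| * N x)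
    (htri : ∀ x y, N (x + y) ≤ N x + N y)
    (B Bpolar : Set (EuclideanSpace ℝ (Fin n)))
    (hB : B = {x | N x ≤ 1})
    (hBpolar : Bpolar = {y | ∀ x ∈ B, ⟪x, y⟫ ≤ 1})
    (f : EuclideanSpace ℝ (Fin n) → ℝ)
    (hf : ∀ x, f x = ((volume Bpolar).toReal)⁻¹ * ∫ y in Bpolar, (⟪x, y⟫ : ℝ) ^ d) :
    ∀ x : EuclideanSpace ℝ (Fin n), ((d : ℝ)/(n + d)) * ((n : ℝ)/(n + d)) ^ ((n : ℝ)/d) * N x ≤ (f x) ^ ((d : ℝ)⁻¹) := by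
  intro x
  subst hB hBpolar
  obtain ⟨p, rfl⟩ : ∃ p : Seminorm ℝ (EuclideanSpace ℝ (Fin n)), ⇑p = N :=
    ⟨Seminorm.of N htri fun c x => by rw [hhom, Real.norm_eq_abs], rfl⟩
  have hfx : 0 ≤ f x := by
    rw [hf]
    exact mul_nonneg (by positivity) (integral_nonneg fun y => hdeven.pow_nonneg _)
  rcases eq_or_ne x 0 with rfl | hx
  · simpa using Real.rpow_nonneg hfx _
  have hmoment := (pow_mul_pow_le_polarUnitBall_moment volume hpos hd hdeven hx).trans_eq
    (hf x).symm
  rw [finrank_euclideanSpace_fin] at hmoment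
  rw [Real.le_rpow_inv_iff_of_pos (by positivity) hfx (by positivity)]
  convert hmoment using 1
  have hroot : (((n : ℝ) / (n + d)) ^ ((n : ℝ) / d)) ^ d = ((n : ℝ) / (n + d)) ^ n := by
    rw [← Real.rpow_natCast _ d, ← Real.rpow_mul (by positivity),
      div_mul_cancel₀ _ (by positivity), Real.rpow_natCast]
  rw [Real.rpow_natCast, mul_right_comm, mul_pow, mul_pow, hroot]

theorem stmt9 (n : ℕ) (hn : 1 ≤ n) (d : ℕ) (hd : 0 < d) (hdeven : Even d)
    (N : EuclideanSpace ℝ (Fin n) → ℝ)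
    (hpos : ∀ x, x ≠ 0 → 0 < N x) (hzero : N 0 = 0)
    (hhom : ∀ (c : ℝ) x, N (c • x) = |c| * N x)
    (htri : ∀ x y, N (x + y) ≤ N x + N y)
    (B Bpolar : Set (EuclideanSpace ℝ (Fin n)))
    (hB : B = {x | N x ≤ 1})
    (hBpolar : Bpolar = {y | ∀ x ∈ B, ⟪x, y⟫ ≤ 1})
    (f : EuclideanSpace ℝ (Fin n) → ℝ)
    (hf : ∀ x, f x = ((volume Bpolar).toReal)⁻¹ * ∫ y in Bpolar, (⟪x, y⟫ : ℝ) ^ d) :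
    ∀ x : EuclideanSpace ℝ (Fin n), ((d : ℝ)/(n + d)) * ((n : ℝ)/(n + d)) ^ ((n : ℝ)/d) * N x ≤ (f x) ^ ((d : ℝ)⁻¹) :=
  stmt9_general n d hd hdeven N hpos hhom htri B Bpolar hB hBpolar f hf
end

section
/- The Motzkin polynomial M(x,y) = x⁴y² + x²y⁴ − 3x²y² + 1 is nonnegative on ℝ² but is not a sum of squares of polynomials. -/
/-!
Nonnegativity is AM-GM for `x⁴y²`, `x²y⁴` and `1`. If `M = ∑ qᵢ²`, compare weighted-homogeneous
components of top weight: they cannot cancel, since a sum of squares of real polynomials vanishes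
only if every term does. Hence every monomial of every `qᵢ` lies in half the Newton polytope of
`M`, the triangle with vertices `(0,0)`, `(2,1)`, `(1,2)`, whose lattice points are `(0,0)`,
`(1,1)`, `(2,1)`, `(1,2)`. Among these, `(2,2)` is a sum of two only as `(1,1) + (1,1)`, so the
coefficient of `x²y²` in each `qᵢ²` is a square, whereas in `M` it is `-3`.
-/

open MvPolynomial Finsupp

namespace MvPolynomial

variable {σ M : Type*} [AddCommMonoid M] [LinearOrder M] [IsOrderedCancelAddMonoid M]

theorem weightedHomogeneousComponent_mul_of_le {R : Type*} [CommSemiring R] {w : σ → M}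
    {m n : M} {p q : MvPolynomial σ R}
    (hp : ∀ d ∈ p.support, weight w d ≤ m) (hq : ∀ d ∈ q.support, weight w d ≤ n) :
    weightedHomogeneousComponent w (m + n) (p * q) =
      weightedHomogeneousComponent w m p * weightedHomogeneousComponent w n q := by
  classical
  ext d
  rw [coeff_weightedHomogeneousComponent]
  split_ifs with hd
  · rw [coeff_mul, coeff_mul]
    refine Finset.sum_congr rfl fun ⟨a, b⟩ hab => ?_
    have hw : weight w a + weight w b = m + n := by
      rw [← map_add, Finset.HasAntidiagonal.mem_antidiagonal.1 hab, hd]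
    simp only [coeff_weightedHomogeneousComponent]
    by_cases ha : weight w a = m
    · rw [if_pos ha, if_pos (add_left_cancel (ha ▸ hw))]
    rw [if_neg ha, zero_mul]
    by_cases hpa : coeff a p = 0
    · rw [hpa, zero_mul]
    have hb : n < weight w b := by
      by_contra! hb
      exact ha ((hp a (mem_support_iff.2 hpa)).antisymm
        (le_of_add_le_add_right (hw.symm.le.trans (add_le_add le_rfl hb))))
    rw [notMem_support_iff.1 fun hb' => (hq b hb').not_gt hb, mul_zero]
  · exact (((weightedHomogeneousComponent_isWeightedHomogeneous m p).mul
      (weightedHomogeneousComponent_isWeightedHomogeneous n q)).coeff_eq_zero d hd).symm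

variable {R : Type*} [CommRing R] [LinearOrder R] [IsStrictOrderedRing R]

theorem eq_zero_of_sum_sq_eq_zero {ι : Type*} [Fintype ι] {q : ι → MvPolynomial σ R}
    (h : ∑ i, q i ^ 2 = 0) (i : ι) : q i = 0 :=
  funext fun x => by
    have hx : ∑ j, eval x (q j) ^ 2 = 0 := by simpa using congr_arg (eval x) h
    simpa using
      (Finset.sum_eq_zero_iff_of_nonneg fun j _ => sq_nonneg _).1 hx i (Finset.mem_univ i)

theorem weight_le_of_mem_support_of_sum_sq {ι : Type*} [Fintype ι] {w : σ → M} {c : M}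
    {q : ι → MvPolynomial σ R} (h : ∀ d ∈ (∑ i, q i ^ 2).support, weight w d ≤ c + c)
    (i : ι) {d : σ →₀ ℕ} (hd : d ∈ (q i).support) : weight w d ≤ c := by
  classical
  by_contra! hcd
  obtain ⟨⟨j, e⟩, he, hmax⟩ := (Finset.univ.sigma fun i => (q i).support).exists_max_image
    (fun x => weight w x.2) ⟨⟨i, d⟩, by simp [hd]⟩
  set n := weight w e
  have hle : ∀ k, ∀ d ∈ (q k).support, weight w d ≤ n := fun k d hd => hmax ⟨k, d⟩ (by simp [hd])
  have hcn : c < n := hcd.trans_le (hle i d hd)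
  have hsum : ∑ k, weightedHomogeneousComponent w n (q k) ^ 2 = 0 := by
    calc _ = weightedHomogeneousComponent w (n + n) (∑ k, q k ^ 2) := by
          simp only [map_sum, sq, weightedHomogeneousComponent_mul_of_le (hle _) (hle _)]
      _ = 0 := weightedHomogeneousComponent_eq_zero' _ _ fun d hd =>
          ((h d hd).trans_lt (add_lt_add hcn hcn)).ne
  have := congr_arg (coeff e) (eq_zero_of_sum_sq_eq_zero hsum j)
  rw [coeff_weightedHomogeneousComponent, if_pos rfl, coeff_zero] at this
  simp only [Finset.mem_sigma] at he
  exact mem_support_iff.1 he.2 this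

theorem coeff_sq_nonneg_of_add_eq_imp_eq {p : MvPolynomial σ R} {d : σ →₀ ℕ}
    (h : ∀ a ∈ p.support, ∀ b ∈ p.support, a + b = d → a = b) : 0 ≤ coeff d (p ^ 2) := by
  classical
  rw [sq, coeff_mul]
  refine Finset.sum_nonneg fun ⟨a, b⟩ hab => ?_
  by_cases ha : coeff a p = 0
  · simp [ha]
  by_cases hb : coeff b p = 0
  · simp [hb]
  obtain rfl := h a (mem_support_iff.2 ha) b (mem_support_iff.2 hb)
    (Finset.HasAntidiagonal.mem_antidiagonal.1 hab)
  exact mul_self_nonneg _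

end MvPolynomial

noncomputable def motzkin : MvPolynomial (Fin 2) ℝ :=
  X 0 ^ 4 * X 1 ^ 2 + X 0 ^ 2 * X 1 ^ 4 - C 3 * X 0 ^ 2 * X 1 ^ 2 + 1

theorem eval_motzkin_nonneg (x : Fin 2 → ℝ) : 0 ≤ eval x motzkin := by
  simp only [motzkin, map_add, map_sub, map_mul, map_pow, eval_X, eval_C, map_one]
  nlinarith [sq_nonneg (x 0 * x 1), sq_nonneg (x 0 ^ 2 - x 1 ^ 2), sq_nonneg (x 0 * x 1 - 1),
    sq_nonneg (x 0 ^ 2 * x 1 ^ 2 - 1)]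

theorem motzkin_eq_sum_monomial : motzkin =
    monomial (single 0 4 + single 1 2) 1 + monomial (single 0 2 + single 1 4) 1
      - monomial (single 0 2 + single 1 2) 3 + monomial 0 1 := by
  simp only [motzkin, X_pow_eq_monomial, C_mul_monomial, monomial_mul, mul_one]
  rfl

theorem mem_support_motzkin {d : Fin 2 →₀ ℕ} (hd : d ∈ motzkin.support) :
    d = single 0 4 + single 1 2 ∨ d = single 0 2 + single 1 4 ∨ d = single 0 2 + single 1 2 ∨
      d = 0 := by
  contrapose! hd
  rw [motzkin_eq_sum_monomial, MvPolynomial.notMem_support_iff]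
  simp [coeff_monomial, coeff_one, hd.1.symm, hd.2.1.symm, hd.2.2.1.symm, hd.2.2.2.symm]

theorem coeff_motzkin_two_two : coeff (single 0 2 + single 1 2) motzkin = -3 := by
  rw [motzkin_eq_sum_monomial]
  simp [coeff_monomial, coeff_one, Finsupp.ext_iff, Fin.forall_fin_two]

theorem weight_le_of_mem_support_motzkin {w : Fin 2 → ℤ} {c : ℤ}
    (h42 : 4 * w 0 + 2 * w 1 ≤ c + c) (h24 : 2 * w 0 + 4 * w 1 ≤ c + c)
    (h22 : 2 * w 0 + 2 * w 1 ≤ c + c) (h00 : 0 ≤ c + c) {d : Fin 2 →₀ ℕ}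
    (hd : d ∈ motzkin.support) : weight w d ≤ c + c := by
  rcases mem_support_motzkin hd with rfl | rfl | rfl | rfl <;>
    simp only [map_add, map_zero, weight_single, nsmul_eq_mul, Nat.cast_ofNat] <;> assumption

theorem support_bounds_of_motzkin_eq_sum_sq {ι : Type*} [Fintype ι]
    {q : ι → MvPolynomial (Fin 2) ℝ} (h : motzkin = ∑ i, q i ^ 2) (i : ι) {d : Fin 2 →₀ ℕ}
    (hd : d ∈ (q i).support) : d 0 + d 1 ≤ 3 ∧ d 1 ≤ 2 * d 0 ∧ d 0 ≤ 2 * d 1 := by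
  have key (a b c : ℤ) (h42 : 4 * a + 2 * b ≤ c + c) (h24 : 2 * a + 4 * b ≤ c + c)
      (h22 : 2 * a + 2 * b ≤ c + c) (h00 : 0 ≤ c + c) : d 0 * a + d 1 * b ≤ c := by
    have := weight_le_of_mem_support_of_sum_sq (w := ![a, b])
      (fun e he => weight_le_of_mem_support_motzkin h42 h24 h22 h00 (h ▸ he)) i hd
    simpa [weight_eq_sum, Fin.sum_univ_two] using this
  -- `(1, 1)`, `(-2, 1)`, `(1, -2)` are the outer normals of the half Newton polytope of `motzkin`.
  have := key 1 1 3 (by norm_num) (by norm_num) (by norm_num) (by norm_num)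
  have := key (-2) 1 0 (by norm_num) (by norm_num) (by norm_num) (by norm_num)
  have := key 1 (-2) 0 (by norm_num) (by norm_num) (by norm_num) (by norm_num)
  omega

theorem motzkin_ne_sum_sq {ι : Type*} [Fintype ι] (q : ι → MvPolynomial (Fin 2) ℝ) :
    motzkin ≠ ∑ i, q i ^ 2 := by
  intro h
  have hnonneg : 0 ≤ coeff (single 0 2 + single 1 2) motzkin := by
    rw [h, coeff_sum]
    refine Finset.sum_nonneg fun i _ => coeff_sq_nonneg_of_add_eq_imp_eq fun a ha b hb hab => ?_
    have ha' := support_bounds_of_motzkin_eq_sum_sq h i ha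
    have hb' := support_bounds_of_motzkin_eq_sum_sq h i hb
    have h0 : a 0 + b 0 = 2 := by simpa using DFunLike.congr_fun hab 0
    have h1 : a 1 + b 1 = 2 := by simpa using DFunLike.congr_fun hab 1
    exact Finsupp.ext (Fin.forall_fin_two.2 ⟨by omega, by omega⟩)
  rw [coeff_motzkin_two_two] at hnonneg
  norm_num at hnonneg

theorem stmt14 (M : MvPolynomial (Fin 2) ℝ)
    (hM : M = X 0 ^ 4 * X 1 ^ 2 + X 0 ^ 2 * X 1 ^ 4 - C 3 * X 0 ^ 2 * X 1 ^ 2 + 1) :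
    (∀ x : Fin 2 → ℝ, 0 ≤ eval x M) ∧
    ¬ ∃ (k : ℕ) (q : Fin k → MvPolynomial (Fin 2) ℝ), M = ∑ i, (q i) ^ 2 := by
  subst hM
  exact ⟨eval_motzkin_nonneg, fun ⟨_, q, h⟩ => motzkin_ne_sum_sq q h⟩
end

section
/- Let A ∈ ℝⁿˣⁿ. The spectral radius of A is strictly less than 1 if and only if there exists a positive definite symmetric matrix Q such that the quadratic norm V(x) = √(xᵀQx) satisfies V(Ax) < V(x) for all x ≠ 0. -/
/-!
If every eigenvalue of `A` lies in the open unit disc, Gelfand's formula makes `‖Aᵏ‖` decay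
geometrically, so `Q = ∑ₖ (Aᵏ)ᵀ Aᵏ` converges. It solves the Lyapunov equation `AᵀQA + 1 = Q`,
that is `V(x)² = ‖x‖² + V(Ax)²`, which gives both `Q > 0` and `V(Ax) < V(x)`.

Conversely, let `Av = μv` with `v = a + ib ≠ 0` complex. The Hermitian extension of `V²` gives
`V(Aa)² + V(Ab)² = |μ|² (V(a)² + V(b)²)`, and strict decrease of `V` forces `|μ| < 1`.
-/

open Matrix Filter

section SpectralRadius

variable {A : Type*} [NormedRing A] [NormedAlgebra ℂ A] [CompleteSpace A]

theorem spectralRadius_lt_one_of_forall_norm_lt_one {a : A}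
    (h : ∀ μ ∈ spectrum ℂ a, ‖μ‖ < 1) : spectralRadius ℂ a < 1 := by
  cases subsingleton_or_nontrivial A
  · simp [spectrum.SpectralRadius.of_subsingleton]
  · exact_mod_cast spectrum.spectralRadius_lt_of_forall_lt a (r := 1)
      fun μ hμ => by exact_mod_cast h μ hμ

theorem exists_norm_pow_le_of_spectralRadius_lt_one {a : A} (h : spectralRadius ℂ a < 1) :
    ∃ r, 0 ≤ r ∧ r < 1 ∧ ∀ᶠ n in atTop, ‖a ^ n‖ ≤ r ^ n := by
  obtain ⟨r, hr0, hρr, hr1⟩ := ENNReal.lt_iff_exists_real_btwn.mp h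
  refine ⟨r, hr0, ENNReal.ofReal_lt_one.mp hr1, ?_⟩
  filter_upwards [(spectrum.pow_norm_pow_one_div_tendsto_nhds_spectralRadius a).eventually_lt_const
    hρr, eventually_ne_atTop 0] with n hn hn0
  rw [ENNReal.ofReal_lt_ofReal_iff'] at hn
  calc ‖a ^ n‖ = (‖a ^ n‖ ^ (1 / n : ℝ)) ^ n := by
        rw [one_div, Real.rpow_inv_natCast_pow (norm_nonneg _) hn0]
    _ ≤ r ^ n := pow_le_pow_left₀ (by positivity) hn.1.le n

end SpectralRadius

section QuadraticForm

variable {ι : Type*} [Fintype ι]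

theorem HasSum.dotProduct_mulVec {R : Type*} [CommSemiring R] [TopologicalSpace R]
    [IsTopologicalSemiring R] {f : ℕ → Matrix ι ι R} {Q : Matrix ι ι R} (hf : HasSum f Q)
    (x : ι → R) : HasSum (fun k => x ⬝ᵥ f k *ᵥ x) (x ⬝ᵥ Q *ᵥ x) :=
  hf.map (⟨⟨fun M => x ⬝ᵥ M *ᵥ x, by simp⟩, fun M N => by
      simp only [add_mulVec, dotProduct_add]⟩ : Matrix ι ι R →+ R)
    (continuous_const.dotProduct (continuous_id.matrix_mulVec continuous_const))

theorem dotProduct_mulVec_eq_dotProduct_self_add {R : Type*} [CommRing R] [DecidableEq ι]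
    {A Q : Matrix ι ι R} (h : Aᵀ * Q * A + 1 = Q) (x : ι → R) :
    x ⬝ᵥ Q *ᵥ x = x ⬝ᵥ x + (A *ᵥ x) ⬝ᵥ Q *ᵥ (A *ᵥ x) := by
  conv_lhs => rw [← h]
  rw [add_mulVec, one_mulVec, dotProduct_add, ← mulVec_mulVec, ← mulVec_mulVec,
    dotProduct_mulVec x Aᵀ, vecMul_transpose, add_comm]

theorem re_star_dotProduct_map_mulVec (Q : Matrix ι ι ℝ) (w : ι → ℂ) :
    (star w ⬝ᵥ Q.map (algebraMap ℝ ℂ) *ᵥ w).re =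
      (Complex.re ∘ w) ⬝ᵥ Q *ᵥ (Complex.re ∘ w) + (Complex.im ∘ w) ⬝ᵥ Q *ᵥ (Complex.im ∘ w) := by
  simp only [dotProduct, mulVec, Complex.re_sum, Finset.mul_sum, ← Finset.sum_add_distrib]
  refine Finset.sum_congr rfl fun i _ => Finset.sum_congr rfl fun j _ => ?_
  simp [Complex.mul_re, Complex.mul_im]

theorem re_map_mulVec (A : Matrix ι ι ℝ) (w : ι → ℂ) :
    Complex.re ∘ (A.map (algebraMap ℝ ℂ) *ᵥ w) = A *ᵥ (Complex.re ∘ w) := by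
  ext i
  simp [mulVec, dotProduct, Complex.re_sum]

theorem im_map_mulVec (A : Matrix ι ι ℝ) (w : ι → ℂ) :
    Complex.im ∘ (A.map (algebraMap ℝ ℂ) *ᵥ w) = A *ᵥ (Complex.im ∘ w) := by
  ext i
  simp [mulVec, dotProduct, Complex.im_sum]

end QuadraticForm

section Lyapunov

variable {ι : Type*} [Fintype ι] [DecidableEq ι]

theorem HasSum.transpose_mul_mul_add_one {R : Type*} [CommRing R] [TopologicalSpace R]
    [IsTopologicalRing R] [T2Space R] {A Q : Matrix ι ι R}
    (hQ : HasSum (fun k => (A ^ k)ᵀ * A ^ k) Q) : Aᵀ * Q * A + 1 = Q := by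
  have hshift := (hasSum_nat_add_iff' 1).mpr hQ
  have hconj := (hQ.mul_left Aᵀ).mul_right A
  simp only [pow_succ, transpose_mul, Finset.range_one, Finset.sum_singleton, pow_zero,
    transpose_one, mul_one, Matrix.mul_assoc] at hshift hconj
  rw [Matrix.mul_assoc, ← eq_sub_iff_add_eq]
  exact hconj.unique hshift

open scoped Matrix.Norms.Frobenius in
theorem summable_transpose_pow_mul_pow {A : Matrix ι ι ℝ}
    (h : ∀ μ ∈ spectrum ℂ (A.map (algebraMap ℝ ℂ)), ‖μ‖ < 1) :
    Summable fun k => (A ^ k)ᵀ * A ^ k := by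
  have : CompleteSpace (Matrix ι ι ℂ) := FiniteDimensional.complete ℂ _
  obtain ⟨r, hr0, hr1, hr⟩ := exists_norm_pow_le_of_spectralRadius_lt_one
    (spectralRadius_lt_one_of_forall_norm_lt_one h)
  refine Summable.of_norm_bounded_eventually_nat (g := fun k => (r ^ 2) ^ k)
    (summable_geometric_of_lt_one (by positivity) (by nlinarith)) ?_
  filter_upwards [hr] with k hk
  have hnorm : ‖A ^ k‖ = ‖A.map (algebraMap ℝ ℂ) ^ k‖ := by
    rw [← Matrix.map_pow _ (algebraMap ℝ ℂ), frobenius_norm_map_eq]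
    simp
  calc ‖(A ^ k)ᵀ * A ^ k‖ ≤ ‖A ^ k‖ * ‖A ^ k‖ := by
        simpa only [frobenius_norm_transpose] using frobenius_norm_mul (A ^ k)ᵀ (A ^ k)
    _ ≤ r ^ k * r ^ k := by rw [hnorm]; gcongr
    _ = (r ^ 2) ^ k := by ring

theorem exists_posDef_transpose_mul_mul_add_one {A : Matrix ι ι ℝ}
    (h : ∀ μ ∈ spectrum ℂ (A.map (algebraMap ℝ ℂ)), ‖μ‖ < 1) :
    ∃ Q : Matrix ι ι ℝ, Q.PosDef ∧ Aᵀ * Q * A + 1 = Q := by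
  obtain ⟨Q, hQ⟩ := summable_transpose_pow_mul_pow h
  have hlyap := hQ.transpose_mul_mul_add_one
  have hnonneg (x : ι → ℝ) : 0 ≤ x ⬝ᵥ Q *ᵥ x := by
    refine (hQ.dotProduct_mulVec x).nonneg fun k => ?_
    rw [← mulVec_mulVec, dotProduct_mulVec, vecMul_transpose]
    simpa using dotProduct_star_self_nonneg (A ^ k *ᵥ x)
  refine ⟨Q, posDef_iff_dotProduct_mulVec.mpr ⟨?_, fun x hx => ?_⟩, hlyap⟩
  · rw [IsHermitian, conjTranspose_eq_transpose_of_trivial]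
    refine hQ.matrix_transpose.unique ?_
    simpa only [transpose_mul, transpose_transpose] using hQ
  · have hx' : 0 < x ⬝ᵥ x := by simpa using dotProduct_star_self_pos_iff.mpr hx
    rw [star_trivial, dotProduct_mulVec_eq_dotProduct_self_add hlyap]
    linarith [hnonneg (A *ᵥ x)]

theorem norm_lt_one_of_dotProduct_mulVec_lt {A Q : Matrix ι ι ℝ} (hQ : Q.PosDef)
    (hV : ∀ x ≠ 0, (A *ᵥ x) ⬝ᵥ Q *ᵥ (A *ᵥ x) < x ⬝ᵥ Q *ᵥ x) {μ : ℂ}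
    (hμ : μ ∈ spectrum ℂ (A.map (algebraMap ℝ ℂ))) : ‖μ‖ < 1 := by
  obtain ⟨v, hv⟩ := (Module.End.hasEigenvalue_iff_mem_spectrum
    (f := (A.map (algebraMap ℝ ℂ)).toLin')).mpr (by rwa [spectrum_toLin']) |>.exists_hasEigenvector
  have hAv : A.map (algebraMap ℝ ℂ) *ᵥ v = μ • v := by simpa using hv.apply_eq_smul
  set q : (ι → ℂ) → ℝ := fun w => (star w ⬝ᵥ Q.map (algebraMap ℝ ℂ) *ᵥ w).re
  have hq_smul : q (μ • v) = ‖μ‖ ^ 2 * q v := by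
    simp only [q, star_smul, mulVec_smul, smul_dotProduct, dotProduct_smul, smul_eq_mul,
      ← mul_assoc, Complex.star_def, Complex.mul_conj']
    exact_mod_cast Complex.re_ofReal_mul _ _
  have hle (x : ι → ℝ) : (A *ᵥ x) ⬝ᵥ Q *ᵥ (A *ᵥ x) ≤ x ⬝ᵥ Q *ᵥ x := by
    rcases eq_or_ne x 0 with rfl | hx
    · simp
    · exact (hV x hx).le
  have hpos (x : ι → ℝ) (hx : x ≠ 0) : 0 < x ⬝ᵥ Q *ᵥ x := by
    simpa using hQ.dotProduct_mulVec_pos hx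
  have hnonneg (x : ι → ℝ) : 0 ≤ x ⬝ᵥ Q *ᵥ x := by
    simpa using hQ.posSemidef.dotProduct_mulVec_nonneg x
  have hreim : Complex.re ∘ v ≠ 0 ∨ Complex.im ∘ v ≠ 0 := by
    by_contra! h
    exact hv.2 (funext fun i => Complex.ext (congrFun h.1 i) (congrFun h.2 i))
  have hlt : q (μ • v) < q v := by
    rw [← hAv]
    simp only [q, re_star_dotProduct_map_mulVec, re_map_mulVec, im_map_mulVec]
    rcases hreim with h | h
    · exact add_lt_add_of_lt_of_le (hV _ h) (hle _)
    · exact add_lt_add_of_le_of_lt (hle _) (hV _ h)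
  have hqv : 0 < q v := by
    simp only [q, re_star_dotProduct_map_mulVec]
    rcases hreim with h | h
    · exact add_pos_of_pos_of_nonneg (hpos _ h) (hnonneg _)
    · exact add_pos_of_nonneg_of_pos (hnonneg _) (hpos _ h)
  rw [hq_smul, mul_lt_iff_lt_one_left hqv] at hlt
  exact (sq_lt_one_iff₀ (norm_nonneg μ)).mp hlt

end Lyapunov

theorem stmt18 (n : ℕ) (A : Matrix (Fin n) (Fin n) ℝ) :
    (∀ μ : ℂ, μ ∈ spectrum ℂ (A.map (algebraMap ℝ ℂ)) → ‖μ‖ < 1) ↔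
    ∃ Q : Matrix (Fin n) (Fin n) ℝ, Q.PosDef ∧
      ∀ x : Fin n → ℝ, x ≠ 0 →
        Real.sqrt ((A.mulVec x) ⬝ᵥ Q.mulVec (A.mulVec x)) <
          Real.sqrt (x ⬝ᵥ Q.mulVec x) := by
  have hsqrt (Q : Matrix (Fin n) (Fin n) ℝ) (hQ : Q.PosDef) (x : Fin n → ℝ) :
      √((A *ᵥ x) ⬝ᵥ Q *ᵥ (A *ᵥ x)) < √(x ⬝ᵥ Q *ᵥ x) ↔
        (A *ᵥ x) ⬝ᵥ Q *ᵥ (A *ᵥ x) < x ⬝ᵥ Q *ᵥ x :=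
    Real.sqrt_lt_sqrt_iff (by simpa using hQ.posSemidef.dotProduct_mulVec_nonneg (A *ᵥ x))
  constructor
  · intro h
    obtain ⟨Q, hQ, hlyap⟩ := exists_posDef_transpose_mul_mul_add_one h
    refine ⟨Q, hQ, fun x hx => (hsqrt Q hQ x).mpr ?_⟩
    have hx' : 0 < x ⬝ᵥ x := by simpa using dotProduct_star_self_pos_iff.mpr hx
    rw [dotProduct_mulVec_eq_dotProduct_self_add hlyap x]
    linarith
  · rintro ⟨Q, hQ, hV⟩ μ hμ
    exact norm_lt_one_of_dotProduct_mulVec_lt hQ (fun x hx => (hsqrt Q hQ x).mp (hV x hx)) hμ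
end
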